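/- For every positive integer n there exists an element c of Thompson's group T of order exactly n such that for every integer k with 1 ≤ k < n, the rotation number of c^k equals k/n (mod 1). -/

import Mathlib

open Set

/-- The group of self-homeomorphisms of a topological space,
with `(f * g) x = f (g x)`. -/
instance homeomorphGroup (X : Type*) [TopologicalSpace X] : Group (X ≃ₜ X) where
  mul f g := g.trans f
  one := Homeomorph.refl X
  inv := Homeomorph.symm
  mul_assoc _ _ _ := Homeomorph.ext fun _ => rfl
  one_mul _ := Homeomorph.ext fun _ => rfl
  mul_one _ := Homeomorph.ext fun _ => rfl
  inv_mul_cancel a := Homeomorph.ext fun x => a.symm_apply_apply x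

/-- A real number is a dyadic rational if it has the form `a / 2 ^ b`. -/
def IsDyadic (x : ℝ) : Prop := ∃ a : ℤ, ∃ b : ℕ, x = (a : ℝ) / 2 ^ b

/-- A point of the circle `ℝ/ℤ` is dyadic if it is the image of a dyadic rational. -/
def IsDyadicPt (x : AddCircle (1:ℝ)) : Prop :=
  ∃ r : ℝ, IsDyadic r ∧ (r : AddCircle (1:ℝ)) = x

/-- `F : ℝ → ℝ` is a lift of the circle map `f` if `F (x+1) = F x + 1` and the
reduction of `F` modulo 1 is `f`. -/
def IsLiftOf (f : AddCircle (1:ℝ) ≃ₜ AddCircle (1:ℝ)) (F : ℝ → ℝ) : Prop :=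
  (∀ x : ℝ, F (x + 1) = F x + 1) ∧
  ∀ x : ℝ, f (x : AddCircle (1:ℝ)) = ((F x : ℝ) : AddCircle (1:ℝ))

/-- A self-homeomorphism of the circle `ℝ/ℤ` belongs to Thompson's group `T` iff it maps
the set of dyadic points onto itself and has an increasing lift `F : ℝ → ℝ` that is
piecewise linear with respect to a finite dyadic partition `0 = t 0 < ⋯ < t m = 1`,
every slope being an integer power of `2` and every breakpoint `(t i, F (t i))`
having dyadic rational coordinates. -/
def InThompsonT (f : AddCircle (1:ℝ) ≃ₜ AddCircle (1:ℝ)) : Prop :=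
  (∀ x, IsDyadicPt x ↔ IsDyadicPt (f x)) ∧
  ∃ F : ℝ → ℝ, StrictMono F ∧ IsLiftOf f F ∧
    ∃ m : ℕ, ∃ t : Fin (m + 1) → ℝ,
      StrictMono t ∧ t 0 = 0 ∧ t (Fin.last m) = 1 ∧
      (∀ i, IsDyadic (t i) ∧ IsDyadic (F (t i))) ∧
      ∀ i : Fin m, ∃ k : ℤ, ∃ c : ℝ,
        ∀ x ∈ Icc (t i.castSucc) (t i.succ), F x = (2 : ℝ) ^ k * x + c

/-!
For `n = p + 2`, the element is the circle map lifted by a piecewise linear map with slopes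
`1/2, …, 1/2, 1, 2 ^ p` that permutes the `p + 2` dyadic intervals
`[0, 1/2], [1/2, 3/4], …, [1 - 2⁻ᵖ, 1 - 2⁻ᵖ⁻¹], [1 - 2⁻ᵖ⁻¹, 1]` cyclically (modulo `1`).
The slopes along the cycle multiply to `1`, so the `n`-th power of the lift is the translation
by `1`; hence the lift of `c ^ k` has translation number `k / n`, and any other lift of `c ^ k`
differs from it by an integer. Finally `c ^ k = 1` with `0 < k < n` would make `k / n` integral.
-/

open Function

namespace CircleDeg1Lift

lemma coe_eq_coe_iff_exists_int {x y : ℝ} :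
    (x : AddCircle (1:ℝ)) = y ↔ ∃ m : ℤ, y = x + m := by
  rw [QuotientAddGroup.eq, AddSubgroup.mem_zmultiples_iff]
  simp only [zsmul_one]
  exact ⟨fun ⟨m, hm⟩ => ⟨m, by linarith⟩, fun ⟨m, hm⟩ => ⟨m, by linarith⟩⟩

def circleMap (f : CircleDeg1Lift) : AddCircle (1:ℝ) → AddCircle (1:ℝ) :=
  Periodic.lift (f := fun x : ℝ => (f x : AddCircle (1:ℝ))) fun x => by
    simp [map_add_one]

lemma continuous_circleMap {f : CircleDeg1Lift} (hf : Continuous f) : Continuous f.circleMap :=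
  ((AddCircle.continuous_mk' 1).comp hf).quotient_liftOn' _

lemma circleMap_mul_apply (f g : CircleDeg1Lift) (x : AddCircle (1:ℝ)) :
    (f * g).circleMap x = f.circleMap (g.circleMap x) := by
  induction x using QuotientAddGroup.induction_on
  rfl

lemma circleMap_one_apply (x : AddCircle (1:ℝ)) : (1 : CircleDeg1Lift).circleMap x = x := by
  induction x using QuotientAddGroup.induction_on
  rfl

lemma continuous_units_coe (f : CircleDeg1Liftˣ) : Continuous f := by
  rw [← coe_toOrderIso]
  exact (toOrderIso f).continuous

def toCircleHomeomorph : CircleDeg1Liftˣ →* AddCircle (1:ℝ) ≃ₜ AddCircle (1:ℝ) where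
  toFun f :=
    { toFun := circleMap f
      invFun := circleMap ↑f⁻¹
      left_inv x := by rw [← circleMap_mul_apply, Units.inv_mul, circleMap_one_apply]
      right_inv x := by rw [← circleMap_mul_apply, Units.mul_inv, circleMap_one_apply]
      continuous_toFun := continuous_circleMap (continuous_units_coe f)
      continuous_invFun := continuous_circleMap (continuous_units_coe f⁻¹) }
  map_one' := Homeomorph.ext circleMap_one_apply
  map_mul' f g := Homeomorph.ext (circleMap_mul_apply f g)

lemma toCircleHomeomorph_apply_coe (f : CircleDeg1Liftˣ) (x : ℝ) :
    toCircleHomeomorph f x = ((f x : ℝ) : AddCircle (1:ℝ)) :=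
  rfl

lemma toCircleHomeomorph_pow_apply_coe (f : CircleDeg1Liftˣ) (k : ℕ) (x : ℝ) :
    (toCircleHomeomorph f ^ k) x = ((((f : CircleDeg1Lift) ^ k) x : ℝ) : AddCircle (1:ℝ)) := by
  rw [← map_pow, toCircleHomeomorph_apply_coe, Units.val_pow_eq_pow_val]

lemma exists_eq_add_int_of_forall_coe_eq {F H : CircleDeg1Lift} (hH : StrictMono H)
    (h : ∀ x : ℝ, (F x : AddCircle (1:ℝ)) = H x) : ∃ m : ℤ, ∀ x, F x = H x + m := by
  choose j hj using fun x => coe_eq_coe_iff_exists_int.1 (h x).symm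
  -- Compare `a` with the translate `b - M ∈ (a - 1, a]` of `b`.
  have hle : ∀ a b, j b ≤ j a := by
    intro a b
    set M : ℤ := ⌈b - a⌉
    have hM : b - M ≤ a := by linarith [Int.le_ceil (b - a)]
    have hM' : a < b - M + 1 := by linarith [Int.ceil_lt_add_one (b - a)]
    have hF : F b - M ≤ F a := by rw [← map_sub_int]; exact F.mono hM
    have hH' : H a < H b - M + 1 := by
      have := hH hM'
      rw [show b - M + 1 = b + ((1 - M : ℤ) : ℝ) by push_cast; ring, map_add_int] at this
      push_cast at this
      linarith
    rw [hj a, hj b] at hF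
    have : (j b : ℝ) < j a + 1 := by linarith
    exact_mod_cast Int.lt_add_one_iff.1 (by exact_mod_cast this)
  exact ⟨j 0, fun x => by rw [hj x, le_antisymm (hle 0 x) (hle x 0)]⟩

lemma translationNumber_eq_add_int {F H : CircleDeg1Lift} {m : ℤ} (h : ∀ x, F x = H x + m) :
    translationNumber F = translationNumber H + m := by
  have hF : F = ↑(translate (Multiplicative.ofAdd (m : ℝ))) * H := by
    ext x
    rw [mul_apply, translate_apply, h, add_comm]
  have hcomm : Commute (↑(translate (Multiplicative.ofAdd (m : ℝ))) : CircleDeg1Lift) H :=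
    commute_iff_commute.2 fun x => by simp only [translate_apply, map_int_add]
  rw [hF, translationNumber_mul_of_commute hcomm, translationNumber_translate, add_comm]

section FiniteOrder

variable {u : CircleDeg1Liftˣ} {n : ℕ}

lemma translationNumber_pow_of_pow_eq_add_one (hn : 0 < n)
    (hu : ∀ x, ((u : CircleDeg1Lift) ^ n) x = x + 1) (k : ℕ) :
    translationNumber ((u : CircleDeg1Lift) ^ k) = k / n := by
  have hτ := translationNumber_of_map_pow_eq_add_int (u : CircleDeg1Lift) (m := 1)
    (x := 0) (by simpa using hu 0) hn
  rw [translationNumber_pow, hτ, Int.cast_one, mul_one_div]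

lemma exists_translationNumber_eq_of_lift_pow (hn : 0 < n)
    (hu : ∀ x, ((u : CircleDeg1Lift) ^ n) x = x + 1) (k : ℕ) {F : CircleDeg1Lift}
    (hF : ∀ x : ℝ, (toCircleHomeomorph u ^ k) x = F x) :
    ∃ m : ℤ, translationNumber F = k / n + m := by
  have hstrict : StrictMono ((u : CircleDeg1Lift) ^ k) := by
    rw [← Units.val_pow_eq_pow_val, ← coe_toOrderIso]
    exact (toOrderIso _).strictMono
  obtain ⟨m, hm⟩ := exists_eq_add_int_of_forall_coe_eq hstrict fun x => by
    rw [← hF, toCircleHomeomorph_pow_apply_coe]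
  exact ⟨m, by rw [translationNumber_eq_add_int hm, translationNumber_pow_of_pow_eq_add_one hn hu]⟩

lemma toCircleHomeomorph_pow_eq_one (hu : ∀ x, ((u : CircleDeg1Lift) ^ n) x = x + 1) :
    toCircleHomeomorph u ^ n = 1 := by
  refine Homeomorph.ext fun x => ?_
  induction x using QuotientAddGroup.induction_on with | H x => ?_
  rw [toCircleHomeomorph_pow_apply_coe, hu]
  exact coe_eq_coe_iff_exists_int.2 ⟨-1, by simp⟩

lemma orderOf_toCircleHomeomorph (hn : 0 < n) (hu : ∀ x, ((u : CircleDeg1Lift) ^ n) x = x + 1) :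
    orderOf (toCircleHomeomorph u) = n := by
  rw [orderOf_eq_iff hn]
  refine ⟨toCircleHomeomorph_pow_eq_one hu, fun k hkn hk hone => ?_⟩
  -- The identity lift `1` would then lift `c ^ k`, whose rotation number `k / n` is not integral.
  obtain ⟨m, hm⟩ := exists_translationNumber_eq_of_lift_pow hn hu k (F := 1)
    fun x => by rw [hone]; rfl
  rw [translationNumber_one] at hm
  have hk0 : (0 : ℝ) < k / n := by positivity
  have hk1 : (k : ℝ) / n < 1 := (div_lt_one (by positivity)).2 (by exact_mod_cast hkn)
  have : (m : ℝ) < 0 ∧ (-1 : ℝ) < m := ⟨by linarith, by linarith⟩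
  have : m < 0 ∧ -1 < m := by exact_mod_cast this
  omega

end FiniteOrder

/-- The images of `[x₀, f x₀]` under `f ^ 0, …, f ^ (n - 1)` tile `[x₀, f ^ n x₀] = [x₀, x₀ + 1]`,
and `f ^ n` commutes with `f`. -/
lemma pow_apply_eq_add_one_of_forall_mem_Icc {f : CircleDeg1Lift} (hf : Continuous f) {n : ℕ}
    {x₀ : ℝ} (hx₀ : x₀ ≤ f x₀) (h : ∀ y ∈ Icc x₀ (f x₀), (f ^ n) y = y + 1) (y : ℝ) :
    (f ^ n) y = y + 1 := by
  have hcover : ∀ j : ℕ, ∀ y ∈ Icc x₀ (f^[j] x₀), (f ^ n) y = y + 1 := by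
    intro j
    induction j with
    | zero => exact fun y hy => h y ⟨hy.1, hy.2.trans hx₀⟩
    | succ j ih =>
      intro y hy
      rcases le_total y (f x₀) with hy' | hy'
      · exact h y ⟨hy.1, hy'⟩
      have hj : x₀ ≤ f^[j] x₀ := f.monotone.monotone_iterate_of_le_map hx₀ (Nat.zero_le j)
      rw [iterate_succ_apply'] at hy
      obtain ⟨z, hz, rfl⟩ := intermediate_value_Icc hj hf.continuousOn ⟨hy', hy.2⟩
      rw [← mul_apply, pow_mul_comm', mul_apply, ih z hz, map_add_one]
  have hfn : f^[n] x₀ = x₀ + 1 := by rw [← coe_pow]; exact h x₀ ⟨le_rfl, hx₀⟩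
  set m : ℤ := ⌊y - x₀⌋
  have hm : y - m ∈ Icc x₀ (f^[n] x₀) := by
    rw [hfn]
    constructor <;> linarith [Int.floor_le (y - x₀), Int.lt_floor_add_one (y - x₀)]
  rw [← sub_add_cancel y (m : ℝ), map_add_int, hcover n _ hm]
  ring

end CircleDeg1Lift

def dyadicSubring : Subring ℝ where
  carrier := {x | IsDyadic x}
  mul_mem' := by
    rintro _ _ ⟨a, b, rfl⟩ ⟨c, d, rfl⟩
    exact ⟨a * c, b + d, by push_cast; rw [pow_add, div_mul_div_comm]⟩
  one_mem' := ⟨1, 0, by norm_num⟩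
  add_mem' := by
    rintro _ _ ⟨a, b, rfl⟩ ⟨c, d, rfl⟩
    exact ⟨a * 2 ^ d + c * 2 ^ b, b + d, by push_cast; field_simp; ring⟩
  zero_mem' := ⟨0, 0, by norm_num⟩
  neg_mem' := by
    rintro _ ⟨a, b, rfl⟩
    exact ⟨-a, b, by push_cast; ring⟩

lemma inv_two_pow_mem_dyadicSubring (b : ℕ) : ((2 : ℝ) ^ b)⁻¹ ∈ dyadicSubring :=
  ⟨1, b, by simp⟩

lemma max_mem_dyadicSubring {x y : ℝ} (hx : x ∈ dyadicSubring) (hy : y ∈ dyadicSubring) :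
    max x y ∈ dyadicSubring := by
  rcases max_choice x y with h | h <;> rw [h] <;> assumption

namespace CircleDeg1Lift

lemma isDyadicPt_circleMap {f : CircleDeg1Lift} (hf : MapsTo f dyadicSubring dyadicSubring)
    {x : AddCircle (1:ℝ)} (hx : IsDyadicPt x) : IsDyadicPt (f.circleMap x) := by
  obtain ⟨r, hr, rfl⟩ := hx
  exact ⟨f r, hf hr, rfl⟩

lemma isDyadicPt_toCircleHomeomorph_pow_apply {u : CircleDeg1Liftˣ}
    (hu : MapsTo u dyadicSubring dyadicSubring) (k : ℕ) {x : AddCircle (1:ℝ)}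
    (hx : IsDyadicPt x) : IsDyadicPt ((toCircleHomeomorph u ^ k) x) := by
  rw [← map_pow]
  refine isDyadicPt_circleMap ?_ hx
  rw [Units.val_pow_eq_pow_val, coe_pow]
  exact hu.iterate k

lemma isDyadicPt_iff_toCircleHomeomorph_apply {u : CircleDeg1Liftˣ} {n : ℕ}
    (hn : n ≠ 0) (hun : toCircleHomeomorph u ^ n = 1) (hu : MapsTo u dyadicSubring dyadicSubring)
    (x : AddCircle (1:ℝ)) : IsDyadicPt x ↔ IsDyadicPt (toCircleHomeomorph u x) := by
  refine ⟨isDyadicPt_toCircleHomeomorph_pow_apply hu 1, fun h => ?_⟩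
  have hx : (toCircleHomeomorph u ^ (n - 1)) (toCircleHomeomorph u x) = x := by
    change (toCircleHomeomorph u ^ (n - 1) * toCircleHomeomorph u) x = x
    rw [pow_sub_one_mul hn, hun]
    rfl
  rw [← hx]
  exact isDyadicPt_toCircleHomeomorph_pow_apply hu (n - 1) h

end CircleDeg1Lift

lemma strictMono_comp_fract_add_floor {g : ℝ → ℝ} (hg : StrictMonoOn g (Ico 0 1))
    (h : ∀ x ∈ Ico (0:ℝ) 1, ∀ y ∈ Ico (0:ℝ) 1, g x < g y + 1) :
    StrictMono fun x => g (Int.fract x) + ⌊x⌋ := by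
  have hmem (x : ℝ) : Int.fract x ∈ Ico (0:ℝ) 1 := ⟨Int.fract_nonneg x, Int.fract_lt_one x⟩
  intro x y hxy
  rcases (Int.floor_le_floor hxy.le).eq_or_lt with hfl | hfl
  · have : Int.fract x < Int.fract y := by rw [Int.fract, Int.fract, hfl]; linarith
    simp only [hfl, add_lt_add_iff_right]
    exact hg (hmem x) (hmem y) this
  · have : (⌊x⌋ : ℝ) + 1 ≤ ⌊y⌋ := by exact_mod_cast hfl
    linarith [h _ (hmem x) _ (hmem y)]

namespace ThompsonTorsion

/-- On `[0, 1]`, the piecewise linear map with slopes `1/2`, `1`, `2 ^ p` on `[0, 1 - 2⁻ᵖ]`,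
`[1 - 2⁻ᵖ, 1 - 2⁻ᵖ⁻¹]`, `[1 - 2⁻ᵖ⁻¹, 1]`. It maps `[1 - 2⁻ʲ, 1 - 2⁻ʲ⁻¹]` onto the next such
interval for `j ≤ p`, and `[1 - 2⁻ᵖ⁻¹, 1]` onto `[1, 3/2]`: modulo `1` it permutes these
`p + 2` intervals cyclically. -/
noncomputable def torsionPiece (p : ℕ) (y : ℝ) : ℝ :=
  max ((y + 1) / 2) (max (y + 1 / 2 ^ (p + 1)) (2 ^ p * (y - 1) + 3 / 2))

variable {p : ℕ} {x y : ℝ}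

lemma torsionPiece_left_sub_middle (y : ℝ) :
    (y + 1) / 2 - (y + 1 / 2 ^ (p + 1)) = (1 - 1 / 2 ^ p - y) / 2 := by
  field_simp
  ring

lemma torsionPiece_right_sub_middle (y : ℝ) :
    2 ^ p * (y - 1) + 3 / 2 - (y + 1 / 2 ^ (p + 1)) = (2 ^ p - 1) * (y - (1 - 1 / 2 ^ (p + 1))) := by
  field_simp
  ring

lemma torsionPiece_of_le (hy : y ≤ 1 - 1 / 2 ^ p) : torsionPiece p y = (y + 1) / 2 := by
  have hB := torsionPiece_left_sub_middle (p := p) y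
  have hC := torsionPiece_right_sub_middle (p := p) y
  have h2p : (1 : ℝ) ≤ 2 ^ p := one_le_pow₀ (by norm_num)
  have hp := one_div_pow_le_one_div_pow_of_le (one_le_two (α := ℝ)) (Nat.le_add_right p 1)
  have : (2 ^ p - 1) * (y - (1 - 1 / 2 ^ (p + 1))) ≤ 0 :=
    mul_nonpos_of_nonneg_of_nonpos (by linarith) (by linarith)
  rw [torsionPiece, max_eq_left (max_le (by linarith) (by linarith))]

lemma torsionPiece_of_mem_Icc (hy : y ∈ Icc (1 - 1 / 2 ^ p) (1 - 1 / 2 ^ (p + 1))) :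
    torsionPiece p y = y + 1 / 2 ^ (p + 1) := by
  have hB := torsionPiece_left_sub_middle (p := p) y
  have hC := torsionPiece_right_sub_middle (p := p) y
  have h2p : (1 : ℝ) ≤ 2 ^ p := one_le_pow₀ (by norm_num)
  have : (2 ^ p - 1) * (y - (1 - 1 / 2 ^ (p + 1))) ≤ 0 :=
    mul_nonpos_of_nonneg_of_nonpos (by linarith) (by linarith [hy.2])
  rw [torsionPiece, max_eq_left (show 2 ^ p * (y - 1) + 3 / 2 ≤ y + 1 / 2 ^ (p + 1) by linarith),
    max_eq_right (by linarith [hy.1])]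

lemma torsionPiece_of_ge (hy : 1 - 1 / 2 ^ (p + 1) ≤ y) :
    torsionPiece p y = 2 ^ p * (y - 1) + 3 / 2 := by
  have hB := torsionPiece_left_sub_middle (p := p) y
  have hC := torsionPiece_right_sub_middle (p := p) y
  have h2p : (1 : ℝ) ≤ 2 ^ p := one_le_pow₀ (by norm_num)
  have : 0 ≤ (2 ^ p - 1) * (y - (1 - 1 / 2 ^ (p + 1))) :=
    mul_nonneg (by linarith) (by linarith)
  have := one_div_pow_le_one_div_pow_of_le (one_le_two (α := ℝ)) (Nat.le_add_right p 1)
  rw [torsionPiece, max_eq_right (show y + 1 / 2 ^ (p + 1) ≤ 2 ^ p * (y - 1) + 3 / 2 by linarith),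
    max_eq_right (by linarith)]

lemma strictMono_torsionPiece : StrictMono (torsionPiece p) := fun a b hab =>
  max_lt_max (by linarith) <| max_lt_max (by linarith) <| by
    have : (0 : ℝ) < 2 ^ p := by positivity
    nlinarith

lemma torsionPiece_mem_Ico (hy : y ∈ Ico (0 : ℝ) 1) : torsionPiece p y ∈ Ico (1 / 2 : ℝ) (3 / 2) := by
  have h2p : (0 : ℝ) < 2 ^ p := by positivity
  have hp : (1 : ℝ) / 2 ^ (p + 1) ≤ 1 / 2 := by
    rw [one_div_le_one_div (by positivity) (by norm_num)]
    exact le_self_pow₀ (by norm_num) (by omega)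
  refine ⟨le_max_of_le_left (by linarith [hy.1]), max_lt (by linarith [hy.2]) (max_lt ?_ ?_)⟩
  · linarith [hy.2]
  · nlinarith [hy.2]

lemma torsionPiece_zero : torsionPiece p 0 = 1 / 2 := by
  have : (1 : ℝ) / 2 ^ p ≤ 1 := by rw [div_le_one (by positivity)]; exact one_le_pow₀ (by norm_num)
  rw [torsionPiece_of_le (by linarith)]
  norm_num

lemma torsionPiece_one : torsionPiece p 1 = 3 / 2 := by
  rw [torsionPiece_of_ge] <;> norm_num

lemma torsionPiece_mem_dyadicSubring (hy : y ∈ dyadicSubring) :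
    torsionPiece p y ∈ dyadicSubring := by
  have h2 := inv_two_pow_mem_dyadicSubring 1
  rw [pow_one] at h2
  simp only [torsionPiece, div_eq_mul_inv, one_mul]
  refine max_mem_dyadicSubring ?_ (max_mem_dyadicSubring ?_ ?_)
  · exact mul_mem (add_mem hy (one_mem _)) h2
  · exact add_mem hy (inv_two_pow_mem_dyadicSubring _)
  · exact add_mem (mul_mem (pow_mem (ofNat_mem _ 2) _) (sub_mem hy (one_mem _)))
      (mul_mem (ofNat_mem _ 3) h2)

lemma strictMono_torsionPiece_fract_add_floor :
    StrictMono fun x => torsionPiece p (Int.fract x) + ⌊x⌋ :=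
  strictMono_comp_fract_add_floor (strictMono_torsionPiece.strictMonoOn _) fun _ hx _ hy => by
    linarith [(torsionPiece_mem_Ico (p := p) hx).2, (torsionPiece_mem_Ico (p := p) hy).1]

noncomputable def torsionLift (p : ℕ) : CircleDeg1Lift where
  toFun x := torsionPiece p (Int.fract x) + ⌊x⌋
  monotone' := strictMono_torsionPiece_fract_add_floor.monotone
  map_add_one' x := by
    simp only [Int.fract_add_one, Int.floor_add_one, Int.cast_add, Int.cast_one]
    ring

open CircleDeg1Lift

lemma torsionLift_apply (x : ℝ) : torsionLift p x = torsionPiece p (Int.fract x) + ⌊x⌋ :=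
  rfl

lemma strictMono_torsionLift : StrictMono (torsionLift p) :=
  strictMono_torsionPiece_fract_add_floor

lemma torsionLift_of_mem_Icc (hx : x ∈ Icc (0 : ℝ) 1) : torsionLift p x = torsionPiece p x := by
  rcases hx.2.lt_or_eq with hx1 | rfl
  · rw [torsionLift_apply, Int.fract_eq_self.2 ⟨hx.1, hx1⟩, Int.floor_eq_zero_iff.2 ⟨hx.1, hx1⟩,
      Int.cast_zero, add_zero]
  · rw [torsionLift_apply, Int.fract_one, Int.floor_one, torsionPiece_zero, torsionPiece_one]
    norm_num

lemma torsionLift_zero : torsionLift p 0 = 1 / 2 := by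
  rw [torsionLift_of_mem_Icc (left_mem_Icc.2 zero_le_one), torsionPiece_zero]

lemma continuous_torsionLift : Continuous (torsionLift p) := by
  have hfun : ⇑(torsionLift p) = fun x => x + ((fun y => torsionPiece p y - y) ∘ Int.fract) x := by
    funext x
    rw [torsionLift_apply, comp_apply]
    linarith [Int.floor_add_fract x]
  rw [hfun]
  refine continuous_id.add (ContinuousOn.comp_fract'' (Continuous.continuousOn ?_) ?_)
  · unfold torsionPiece
    fun_prop
  · rw [torsionPiece_zero, torsionPiece_one]
    norm_num

lemma mapsTo_torsionLift_dyadicSubring : MapsTo (torsionLift p) dyadicSubring dyadicSubring :=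
  fun x hx => by
    rw [torsionLift_apply, Int.fract]
    exact add_mem (torsionPiece_mem_dyadicSubring (sub_mem hx (intCast_mem _ _))) (intCast_mem _ _)

lemma torsionLift_iterate_of_le (hx : x ∈ Icc (0 : ℝ) (1 / 2)) :
    ∀ j ≤ p, (torsionLift p)^[j] x = 1 - (1 - x) / 2 ^ j := by
  intro j
  induction j with
  | zero => simp
  | succ j ih =>
    intro hj
    rw [iterate_succ_apply', ih (by omega)]
    have h2j : (1 : ℝ) ≤ 2 ^ j := one_le_pow₀ (by norm_num)
    have hle : (1 - x) / 2 ^ j ≤ 1 := by rw [div_le_one (by positivity)]; linarith [hx.1]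
    have hge : 1 / 2 ^ p ≤ (1 - x) / 2 ^ j :=
      calc (1 : ℝ) / 2 ^ p ≤ 1 / 2 ^ (j + 1) := one_div_pow_le_one_div_pow_of_le one_le_two hj
        _ = (1 / 2) / 2 ^ j := by rw [pow_succ]; ring
        _ ≤ (1 - x) / 2 ^ j := by gcongr; linarith [hx.2]
    have hpos : 0 ≤ (1 - x) / 2 ^ j := div_nonneg (by linarith [hx.2]) (by positivity)
    rw [torsionLift_of_mem_Icc ⟨by linarith, by linarith⟩, torsionPiece_of_le (by linarith),
      pow_succ]
    field_simp
    ring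

lemma torsionLift_iterate_succ (hx : x ∈ Icc (0 : ℝ) (1 / 2)) :
    (torsionLift p)^[p + 1] x = 1 - (1 - 2 * x) / 2 ^ (p + 1) := by
  rw [iterate_succ_apply', torsionLift_iterate_of_le hx p le_rfl]
  have h2p : (1 : ℝ) ≤ 2 ^ p := one_le_pow₀ (by norm_num)
  have hle : (1 - x) / 2 ^ p ≤ 1 / 2 ^ p := by gcongr; linarith [hx.1]
  have hge : 1 / 2 ^ (p + 1) ≤ (1 - x) / 2 ^ p :=
    calc (1 : ℝ) / 2 ^ (p + 1) = (1 / 2) / 2 ^ p := by rw [pow_succ]; ring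
      _ ≤ (1 - x) / 2 ^ p := by gcongr; linarith [hx.2]
  have hp1 : (1 : ℝ) / 2 ^ p ≤ 1 := by rw [div_le_one (by positivity)]; exact h2p
  have hpos : 0 < 1 / (2 : ℝ) ^ (p + 1) := by positivity
  rw [torsionLift_of_mem_Icc ⟨by linarith, by linarith⟩,
    torsionPiece_of_mem_Icc ⟨by linarith, by linarith⟩, pow_succ]
  field_simp
  ring

lemma torsionLift_iterate_add_two (hx : x ∈ Icc (0 : ℝ) (1 / 2)) :
    (torsionLift p)^[p + 2] x = x + 1 := by
  rw [iterate_succ_apply', torsionLift_iterate_succ hx]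
  have hle : (1 - 2 * x) / 2 ^ (p + 1) ≤ 1 / 2 ^ (p + 1) := by gcongr; linarith [hx.1]
  have hpos : 0 ≤ (1 - 2 * x) / 2 ^ (p + 1) := div_nonneg (by linarith [hx.2]) (by positivity)
  have hp1 : (1 : ℝ) / 2 ^ (p + 1) ≤ 1 := by
    rw [div_le_one (by positivity)]; exact one_le_pow₀ (by norm_num)
  rw [torsionLift_of_mem_Icc ⟨by linarith, by linarith⟩, torsionPiece_of_ge (by linarith),
    pow_succ]
  field_simp
  ring

lemma torsionLift_pow_apply (x : ℝ) : (torsionLift p ^ (p + 2)) x = x + 1 := by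
  have h0 : (0 : ℝ) ≤ torsionLift p 0 := by rw [torsionLift_zero]; norm_num
  refine pow_apply_eq_add_one_of_forall_mem_Icc continuous_torsionLift h0 (fun y hy => ?_) x
  rw [torsionLift_zero] at hy
  rw [coe_pow]
  exact torsionLift_iterate_add_two hy

lemma isUnit_torsionLift : IsUnit (torsionLift p) := by
  have : torsionLift p ^ (p + 2) = ↑(translate (Multiplicative.ofAdd 1)) :=
    ext fun x => by rw [torsionLift_pow_apply, translate_apply, add_comm]
  exact (isUnit_pow_iff (by omega)).1 (this ▸ Units.isUnit _)

noncomputable def torsionUnit (p : ℕ) : CircleDeg1Liftˣ :=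
  (isUnit_torsionLift (p := p)).unit

lemma coe_torsionUnit : (torsionUnit p : CircleDeg1Lift) = torsionLift p :=
  IsUnit.unit_spec _

lemma torsionLift_iterate_zero_of_le {j : ℕ} (hj : j ≤ p) :
    (torsionLift p)^[j] 0 = 1 - 1 / 2 ^ j := by
  simpa using torsionLift_iterate_of_le (p := p) (x := 0) ⟨le_rfl, by norm_num⟩ j hj

lemma torsionLift_iterate_zero_succ : (torsionLift p)^[p + 1] 0 = 1 - 1 / 2 ^ (p + 1) := by
  simpa using torsionLift_iterate_succ (p := p) (x := 0) ⟨le_rfl, by norm_num⟩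

lemma torsionLift_iterate_zero_add_two : (torsionLift p)^[p + 2] 0 = 1 := by
  simpa using torsionLift_iterate_add_two (p := p) (x := 0) ⟨le_rfl, by norm_num⟩

/-- The orbit `0, 1/2, 3/4, …, 1 - 2⁻ᵖ⁻¹, 1` of `0` is the partition of `[0, 1]` into the pieces
on which `torsionLift p` is affine. -/
lemma exists_affine_on_Icc_iterate_zero {i : ℕ} (hi : i ≤ p + 1) : ∃ k : ℤ, ∃ c : ℝ,
    ∀ x ∈ Icc ((torsionLift p)^[i] 0) ((torsionLift p)^[i + 1] 0),
      torsionLift p x = (2 : ℝ) ^ k * x + c := by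
  have hmono : Monotone fun j => (torsionLift p)^[j] 0 :=
    (torsionLift p).monotone.monotone_iterate_of_le_map (by rw [torsionLift_zero]; norm_num)
  have h01 : ∀ x ∈ Icc ((torsionLift p)^[i] 0) ((torsionLift p)^[i + 1] 0), x ∈ Icc (0 : ℝ) 1 :=
    fun x hx => ⟨(hmono (Nat.zero_le i)).trans hx.1,
      hx.2.trans ((hmono (show i + 1 ≤ p + 2 by omega)).trans_eq torsionLift_iterate_zero_add_two)⟩
  rcases lt_trichotomy i p with hip | rfl | hip
  · refine ⟨-1, 1 / 2, fun x hx => ?_⟩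
    have hxp : x ≤ 1 - 1 / 2 ^ p :=
      hx.2.trans ((hmono hip).trans_eq (torsionLift_iterate_zero_of_le le_rfl))
    rw [torsionLift_of_mem_Icc (h01 x hx), torsionPiece_of_le hxp, zpow_neg_one]
    ring
  · refine ⟨0, 1 / 2 ^ (i + 1), fun x hx => ?_⟩
    rw [torsionLift_of_mem_Icc (h01 x hx), zpow_zero, one_mul]
    rw [torsionLift_iterate_zero_of_le le_rfl, torsionLift_iterate_zero_succ] at hx
    exact torsionPiece_of_mem_Icc hx
  · obtain rfl : i = p + 1 := by omega
    refine ⟨p, 3 / 2 - 2 ^ p, fun x hx => ?_⟩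
    rw [torsionLift_of_mem_Icc (h01 x hx), zpow_natCast,
      torsionPiece_of_ge (torsionLift_iterate_zero_succ.symm.trans_le hx.1)]
    ring

lemma torsionUnit_pow_apply (x : ℝ) : ((torsionUnit p : CircleDeg1Lift) ^ (p + 2)) x = x + 1 := by
  rw [coe_torsionUnit, torsionLift_pow_apply]

lemma inThompsonT_toCircleHomeomorph_torsionUnit :
    InThompsonT (toCircleHomeomorph (torsionUnit p)) := by
  have hmaps : MapsTo (torsionUnit p : CircleDeg1Lift) dyadicSubring dyadicSubring := by
    rw [coe_torsionUnit]
    exact mapsTo_torsionLift_dyadicSubring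
  refine ⟨isDyadicPt_iff_toCircleHomeomorph_apply (n := p + 2) (by omega)
      (toCircleHomeomorph_pow_eq_one torsionUnit_pow_apply) hmaps,
    torsionLift p, strictMono_torsionLift,
    ⟨map_add_one _, fun x => by rw [toCircleHomeomorph_apply_coe, coe_torsionUnit]⟩,
    p + 2, fun i => (torsionLift p)^[i] 0,
    (strictMono_torsionLift.strictMono_iterate_of_lt_map (by rw [torsionLift_zero]; norm_num)).comp
      Fin.val_strictMono,
    rfl, torsionLift_iterate_zero_add_two,
    fun i => ⟨mapsTo_torsionLift_dyadicSubring.iterate i (zero_mem _),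
      mapsTo_torsionLift_dyadicSubring (mapsTo_torsionLift_dyadicSubring.iterate i (zero_mem _))⟩,
    fun i => ?_⟩
  simpa only [Fin.val_castSucc, Fin.val_succ] using exists_affine_on_Icc_iterate_zero (p := p)
    (i := i) (by omega)

end ThompsonTorsion

lemma inThompsonT_one : InThompsonT 1 :=
  ⟨fun _ => Iff.rfl, id, strictMono_id, ⟨fun _ => rfl, fun _ => rfl⟩, 1, fun i => (i : ℝ),
    Nat.strictMono_cast.comp Fin.val_strictMono, by simp, by simp,
    fun i => ⟨⟨i, 0, by simp⟩, ⟨i, 0, by simp⟩⟩, fun _ => ⟨0, 0, fun _ _ => by simp⟩⟩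

open CircleDeg1Lift ThompsonTorsion

/-- For every positive integer `n` there is an element `c` of Thompson's group `T` of
order exactly `n` such that for every `1 ≤ k < n` the rotation number of `c ^ k` equals
`k / n` modulo 1: every lift of `c ^ k` has translation number `k / n + m` for some
integer `m` (and `c ^ k` does admit a lift). -/
theorem thompsonT_torsion_rotation_number :
    ∀ n : ℕ, 0 < n →
      ∃ c : AddCircle (1:ℝ) ≃ₜ AddCircle (1:ℝ), InThompsonT c ∧ orderOf c = n ∧
        ∀ k : ℕ, 1 ≤ k → k < n →
          (∃ F : CircleDeg1Lift,
            ∀ x : ℝ, (c ^ k) (x : AddCircle (1:ℝ)) = ((F x : ℝ) : AddCircle (1:ℝ))) ∧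
          ∀ F : CircleDeg1Lift,
            (∀ x : ℝ, (c ^ k) (x : AddCircle (1:ℝ)) = ((F x : ℝ) : AddCircle (1:ℝ))) →
            ∃ m : ℤ, F.translationNumber = (k : ℝ) / (n : ℝ) + m := by
  intro n hn
  obtain _ | _ | p := n
  · exact absurd hn (lt_irrefl 0)
  · exact ⟨1, inThompsonT_one, orderOf_one, fun k hk hk1 => absurd hk1 (by omega)⟩
  · refine ⟨toCircleHomeomorph (torsionUnit p), inThompsonT_toCircleHomeomorph_torsionUnit,
      orderOf_toCircleHomeomorph (by omega) torsionUnit_pow_apply, fun k _ _ =>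
      ⟨⟨_, toCircleHomeomorph_pow_apply_coe _ k⟩, fun F hF => ?_⟩⟩
    exact_mod_cast exists_translationNumber_eq_of_lift_pow (by omega) torsionUnit_pow_apply k hF
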